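/- For every integer d ≥ 0, the rational function Φ_d(w) = (∏_{r=0}^{6d}(6w+r))/(∏_{r=0}^{d}(w+r)⁵·∏_{r=1}^{d}(2w+2r−1)) ∈ ℚ(w) is invariant under the substitution w ↦ −w−d, i.e. Φ_d(−w−d) = Φ_d(w). -/

import Mathlib

/-! Under `w ↦ -w - d` each of the three products of `Φ_d`, read in reverse order, is factor by
factor the negative of the original one. The numerator thus acquires the sign `(-1) ^ (6d+1)` and
the denominator `(-1) ^ (d+1) * (-1) ^ d`; both are `-1`, so they cancel. -/

open Finset

noncomputable section

/-- The field ℚ(w). -/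
abbrev Qw : Type := RatFunc ℚ

/-- Φ_d, as a rational-function expression evaluated at an arbitrary element of ℚ(w). -/
def Phi (d : ℕ) (ξ : Qw) : Qw :=
  (∏ r ∈ range (6 * d + 1), (6 * ξ + ((r : ℕ) : Qw))) /
    ((∏ r ∈ range (d + 1), (ξ + ((r : ℕ) : Qw)) ^ 5) *
      ∏ r ∈ range d, (2 * ξ + ((2 * r + 1 : ℕ) : Qw)))

theorem Finset.prod_range_eq_neg_one_pow_mul_of_reflect {M : Type*} [CommMonoid M]
    [HasDistribNeg M] {n : ℕ} {f g : ℕ → M} (h : ∀ r < n, f (n - 1 - r) = -g r) :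
    ∏ r ∈ range n, f r = (-1) ^ n * ∏ r ∈ range n, g r := by
  rw [← prod_range_reflect f n, prod_congr rfl fun r hr => h r (mem_range.mp hr), prod_neg,
    card_range]

section Reflection

variable {R : Type*} [CommRing R] (x : R) (d : ℕ)

theorem prod_range_six_mul_neg_sub :
    ∏ r ∈ range (6 * d + 1), (6 * (-x - d) + ((r : ℕ) : R)) =
      (-1) ^ (6 * d + 1) * ∏ r ∈ range (6 * d + 1), (6 * x + ((r : ℕ) : R)) :=
  prod_range_eq_neg_one_pow_mul_of_reflect fun r hr => by
    push_cast [Nat.cast_sub (Nat.le_of_lt_succ hr)]; ring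

theorem prod_range_neg_sub_pow_five :
    ∏ r ∈ range (d + 1), (-x - d + ((r : ℕ) : R)) ^ 5 =
      (-1) ^ (d + 1) * ∏ r ∈ range (d + 1), (x + ((r : ℕ) : R)) ^ 5 :=
  prod_range_eq_neg_one_pow_mul_of_reflect fun r hr => by
    push_cast [Nat.cast_sub (Nat.le_of_lt_succ hr)]; ring

theorem prod_range_two_mul_neg_sub_add_odd :
    ∏ r ∈ range d, (2 * (-x - d) + ((2 * r + 1 : ℕ) : R)) =
      (-1) ^ d * ∏ r ∈ range d, (2 * x + ((2 * r + 1 : ℕ) : R)) :=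
  prod_range_eq_neg_one_pow_mul_of_reflect fun r hr => by
    rw [Nat.sub_sub, Nat.add_comm 1 r]
    push_cast [Nat.cast_sub (Nat.add_one_le_of_lt hr)]; ring

end Reflection

theorem Phi_neg_sub (d : ℕ) (ξ : Qw) : Phi d (-ξ - d) = Phi d ξ := by
  have hsign : (-1 : Qw) ^ (6 * d + 1) = (-1) ^ (d + 1) * (-1) ^ d := by
    rw [Odd.neg_one_pow ⟨3 * d, by ring⟩, ← pow_add, Odd.neg_one_pow ⟨d, by ring⟩]
  rw [Phi, Phi, prod_range_six_mul_neg_sub, prod_range_neg_sub_pow_five,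
    prod_range_two_mul_neg_sub_add_odd, mul_mul_mul_comm, ← hsign,
    mul_div_mul_left _ _ (pow_ne_zero _ (neg_ne_zero.mpr one_ne_zero))]

theorem statement7 (d : ℕ) :
    Phi d (-RatFunc.X - (d : Qw)) = Phi d RatFunc.X :=
  Phi_neg_sub d RatFunc.X

end
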